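/- If P ⊆ ℝ^d is a 0/1-polytope such that for every wall W of P the subgraph of G(P) induced on W is a regular graph, then P has fractional wall-matchings. -/

import Mathlib

open scoped Classical

noncomputable section

/-- All points of `X` are 0/1-vectors. -/
def IsZeroOne {ι : Type*} (X : Finset (ι → ℝ)) : Prop :=
  ∀ x ∈ X, ∀ i, x i = 0 ∨ x i = 1

/-- Two vertices `u v` of the 0/1-polytope `P = conv X` are adjacent iff they are
distinct and there is a linear functional whose maximum over `P` is attained
exactly on the segment `[u, v]`. -/
def PolytopeAdj {ι : Type*} [Fintype ι] (X : Finset (ι → ℝ)) (u v : ι → ℝ) : Prop :=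
  u ∈ X ∧ v ∈ X ∧ u ≠ v ∧ ∃ (f : (ι → ℝ) →ₗ[ℝ] ℝ) (c : ℝ),
    (∀ x ∈ convexHull ℝ (X : Set (ι → ℝ)), f x ≤ c) ∧
    {x ∈ convexHull ℝ (X : Set (ι → ℝ)) | f x = c} = segment ℝ u v

/-- The graph `G(P)` of the 0/1-polytope `P = conv X`, on the vertex set `X`. -/
def polytopeGraph {ι : Type*} [Fintype ι] (X : Finset (ι → ℝ)) :
    SimpleGraph {x // x ∈ X} where
  Adj u v := PolytopeAdj X u.1 v.1
  symm := by
    constructor; rintro u v ⟨hu, hv, hne, f, c, h1, h2⟩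
    exact ⟨hv, hu, hne.symm, f, c, h1, by rw [h2, segment_symm]⟩
  loopless := by constructor; rintro u ⟨_, _, hne, _⟩; exact hne rfl
/-- A wall of the 0/1-polytope with vertex set `X`: a nonempty set of vertices
obtained by intersecting `X` with a face of the 0/1-cube, given by a sign vector
`σ ∈ {0,1,⋆}^ι` (encoded as `ι → Option Bool`, `none` being `⋆`). -/
def IsWall {ι : Type*} (X : Finset (ι → ℝ)) (W : Set (ι → ℝ)) : Prop :=
  W.Nonempty ∧ ∃ σ : ι → Option Bool,
    W = {x | x ∈ X ∧ ∀ i, ∀ b, σ i = some b → x i = (if b then (1 : ℝ) else 0)}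

/-- `σ(W)ᵢ = ⋆`, i.e. the points of `W` do not all agree in coordinate `i`. -/
def IsStarCoord {ι : Type*} (W : Set (ι → ℝ)) (i : ι) : Prop :=
  ∃ x ∈ W, ∃ y ∈ W, x i ≠ y i
/-- `μ` is the smallest coordinate in which the points of `W` disagree,
i.e. `μ = μ(W)`. -/
def IsLeastStar {ι : Type*} [LinearOrder ι] (W : Set (ι → ℝ)) (μ : ι) : Prop :=
  IsStarCoord W μ ∧ ∀ j, j < μ → ¬ IsStarCoord W j

/-- `(u, v)` is an edge of the bipartite graph `B(W)` (with `μ = μ(W)`),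
oriented from the part `W₀` to the part `W₁`. -/
def WallBipAdj {ι : Type*} [Fintype ι] (X : Finset (ι → ℝ)) (W : Set (ι → ℝ))
    (μ : ι) (u v : ι → ℝ) : Prop :=
  PolytopeAdj X u v ∧ u ∈ W ∧ v ∈ W ∧ u μ = 0 ∧ v μ = 1

/-- The bipartite graph `B(W)` (with `μ = μ(W)`, parts `W₀` and `W₁`) has a
fractional matching: nonnegative weights on its edges such that every node of
`W₀` has weighted degree `1/|W₀|` and every node of `W₁` has weighted degree
`1/|W₁|`. -/
def HasFracMatching {ι : Type*} [Fintype ι] (X : Finset (ι → ℝ)) (W : Set (ι → ℝ))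
    (μ : ι) : Prop :=
  ∃ w : (ι → ℝ) → (ι → ℝ) → ℚ,
    (∀ u v, 0 ≤ w u v) ∧
    (∀ u v, w u v ≠ 0 → WallBipAdj X W μ u v) ∧
    (∀ u ∈ W, u μ = 0 → ∑ v ∈ X, w u v = 1 / ({x ∈ W | x μ = 0}.ncard : ℚ)) ∧
    (∀ v ∈ W, v μ = 1 → ∑ u ∈ X, w u v = 1 / ({x ∈ W | x μ = 1}.ncard : ℚ))

/-- The 0/1-polytope with vertex set `X` has fractional wall-matchings: for every
wall `W` with at least two points (equivalently, with a least star coordinate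
`μ(W)`), the bipartite graph `B(W)` has a fractional matching. -/
def HasFractionalWallMatchings {ι : Type*} [Fintype ι] [LinearOrder ι]
    (X : Finset (ι → ℝ)) : Prop :=
  ∀ W : Set (ι → ℝ), IsWall X W → ∀ μ : ι, IsLeastStar W μ → HasFracMatching X W μ

/-! Fix a wall `W` and a coordinate `μ` in which its points disagree. The layers
`W₀ = {x ∈ W | x μ = 0}` and `W₁ = {x ∈ W | x μ = 1}` are walls as well, so if `W`, `W₀`, `W₁` are
regular of degrees `k`, `k₀`, `k₁`, then `B(W)` is biregular: every point of `W₀` has `k - k₀`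
neighbours in `W₁` and every point of `W₁` has `k - k₁` neighbours in `W₀`. By double counting,
the uniform weight `1 / |E(B(W))|` is then a fractional matching, provided `B(W)` has an edge.

For that edge: a wall is cut out of `P` by a linear functional, and a face of a face of a
polytope is a face. Inside `conv W`, tilt a functional that is injective on `W` by a multiple
of `x ↦ x μ` until the best points of the two layers tie; they span an edge. -/

section Exposed

variable {E : Type*} [AddCommGroup E] [Module ℝ E] {X S T : Set E}

/-- Like Mathlib's `IsExposed`, but with algebraic rather than continuous functionals. -/
def IsLinExposed (X S : Set E) : Prop :=
  ∃ (f : E →ₗ[ℝ] ℝ) (c : ℝ), (∀ x ∈ X, f x ≤ c) ∧ {x ∈ X | f x = c} = S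

theorem IsLinExposed.subset (h : IsLinExposed X S) : S ⊆ X := by
  obtain ⟨f, c, -, rfl⟩ := h
  exact Set.sep_subset _ _

theorem IsLinExposed.trans (hX : X.Finite) (hS : IsLinExposed X S) (hT : IsLinExposed S T) :
    IsLinExposed X T := by
  obtain ⟨g, M, hgM, rfl⟩ := hS
  obtain ⟨h, c, hhc, rfl⟩ := hT
  -- a large multiple of `g` pushes every point off the face `{g = M}` strictly below the level
  have hlarge : ∀ᶠ N in Filter.atTop, ∀ x ∈ X, g x < M → N * g x + h x < N * M + c := by
    refine hX.eventually_all.mpr fun x _ ↦ ?_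
    filter_upwards [Filter.eventually_gt_atTop ((h x - c) / (M - g x))] with N hN hx
    rw [div_lt_iff₀ (sub_pos.mpr hx)] at hN
    linarith
  obtain ⟨N, hN⟩ := hlarge.exists
  refine ⟨N • g + h, N * M + c, fun x hx ↦ ?_, Set.ext fun x ↦ ?_⟩
  · simp only [LinearMap.add_apply, LinearMap.smul_apply, smul_eq_mul]
    rcases (hgM x hx).lt_or_eq with hlt | heq
    · exact (hN x hx hlt).le
    · have := hhc x ⟨hx, heq⟩
      rw [heq]
      linarith
  · simp only [Set.mem_ofPred_eq, LinearMap.add_apply, LinearMap.smul_apply, smul_eq_mul]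
    constructor
    · rintro ⟨hx, hxc⟩
      rcases (hgM x hx).lt_or_eq with hlt | heq
      · exact absurd hxc (hN x hx hlt).ne
      · rw [heq] at hxc
        exact ⟨⟨hx, heq⟩, by linarith⟩
    · rintro ⟨⟨hx, heq⟩, hxc⟩
      exact ⟨hx, by rw [heq, hxc]⟩

theorem IsLinExposed.convexHull (hX : X.Finite) (h : IsLinExposed X S) :
    IsLinExposed (convexHull ℝ X) (convexHull ℝ S) := by
  obtain ⟨f, c, hfc, rfl⟩ := h
  refine ⟨f, c, fun x hx ↦ ?_, ?_⟩
  · exact convexHull_min hfc (convex_halfSpace_le f.isLinear c) hx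
  ext x
  refine ⟨fun ⟨hx, hxc⟩ ↦ ?_, fun hx ↦ ⟨convexHull_mono (Set.sep_subset _ _) hx, ?_⟩⟩
  · rw [hX.convexHull_eq] at hx
    obtain ⟨w, hw0, hw1, rfl⟩ := hx
    have hw0' : ∀ y ∈ hX.toFinset, 0 ≤ w y := fun y hy ↦ hw0 y (hX.mem_toFinset.1 hy)
    have hfx : f (hX.toFinset.centerMass w id) = ∑ y ∈ hX.toFinset, w y * f y := by
      simp [Finset.centerMass_eq_of_sum_1 _ _ hw1]
    -- the weights put no mass on points below the level `c`
    have hslack : ∑ y ∈ hX.toFinset, w y * (c - f y) = 0 := by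
      simp only [mul_sub, Finset.sum_sub_distrib, ← Finset.sum_mul, hw1, one_mul, ← hfx, hxc,
        sub_self]
    have hsupp : ∀ y ∈ hX.toFinset, w y ≠ 0 → y ∈ {x ∈ X | f x = c} := fun y hy hwy ↦ by
      have hyX := hX.mem_toFinset.1 hy
      have := (Finset.sum_eq_zero_iff_of_nonneg fun y hy ↦
        mul_nonneg (hw0' y hy) (sub_nonneg.2 (hfc y (hX.mem_toFinset.1 hy)))).1 hslack y hy
      exact ⟨hyX, by linarith [(mul_eq_zero.1 this).resolve_left hwy]⟩
    rw [← Finset.centerMass_filter_ne_zero]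
    refine Finset.centerMass_mem_convexHull _ (fun y hy ↦ hw0' y (Finset.mem_filter.1 hy).1) ?_
      fun y hy ↦ hsupp y (Finset.mem_filter.1 hy).1 (Finset.mem_filter.1 hy).2
    rw [Finset.sum_filter_ne_zero, hw1]
    exact one_pos
  · exact convexHull_min (fun y hy ↦ hy.2) (convex_hyperplane f.isLinear c) hx

theorem exists_linearMap_injOn (hX : X.Finite) : ∃ f : E →ₗ[ℝ] ℝ, Set.InjOn f X := by
  have := hX.to_subtype
  obtain ⟨f, hf⟩ := Module.exists_dual_forall_apply_ne_zero (K := ℝ)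
    (fun p : {p : X × X // p.1 ≠ p.2} ↦ (p.1.1 : E) - p.1.2)
    fun p ↦ sub_ne_zero.2 (Subtype.coe_ne_coe.2 p.2)
  refine ⟨f, fun x hx y hy hxy ↦ ?_⟩
  by_contra hne
  exact hf ⟨(⟨x, hx⟩, ⟨y, hy⟩), fun h ↦ hne (congrArg Subtype.val h)⟩ (by simp [hxy])

/-- Tilting a functional that is injective on `W` by a multiple of `φ` makes the best points of
the two layers `φ = 0` and `φ = 1` tie. -/
theorem exists_isLinExposed_pair_of_zero_one {W : Set E} (hW : W.Finite) (φ : E →ₗ[ℝ] ℝ)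
    (h01 : ∀ x ∈ W, φ x = 0 ∨ φ x = 1) (h0 : {x ∈ W | φ x = 0}.Nonempty)
    (h1 : {x ∈ W | φ x = 1}.Nonempty) :
    ∃ u ∈ W, ∃ v ∈ W, φ u = 0 ∧ φ v = 1 ∧ IsLinExposed W {u, v} := by
  obtain ⟨ℓ, hℓ⟩ := exists_linearMap_injOn hW
  obtain ⟨u, ⟨huW, hu⟩, hu_max⟩ := Set.exists_max_image {x ∈ W | φ x = 0} ℓ (hW.sep _) h0
  obtain ⟨v, ⟨hvW, hv⟩, hv_max⟩ := Set.exists_max_image {x ∈ W | φ x = 1} ℓ (hW.sep _) h1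
  refine ⟨u, huW, v, hvW, hu, hv, ℓ + (ℓ u - ℓ v) • φ, ℓ u, fun x hx ↦ ?_, Set.ext fun x ↦ ?_⟩
  · rcases h01 x hx with hx0 | hx1
    · simpa [hx0] using hu_max x ⟨hx, hx0⟩
    · simp only [LinearMap.add_apply, LinearMap.smul_apply, smul_eq_mul, hx1]
      linarith [hv_max x ⟨hx, hx1⟩]
  · simp only [Set.mem_ofPred_eq, LinearMap.add_apply, LinearMap.smul_apply, smul_eq_mul,
      Set.mem_insert_iff, Set.mem_singleton_iff]
    constructor
    · rintro ⟨hx, hxu⟩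
      rcases h01 x hx with hx0 | hx1
      · exact Or.inl (hℓ hx huW (by simpa [hx0] using hxu))
      · exact Or.inr (hℓ hx hvW (by rw [hx1] at hxu; linarith))
    · rintro (rfl | rfl)
      · simp [huW, hu]
      · simp [hvW, hv]

end Exposed

theorem polytopeAdj_of_isLinExposed {ι : Type*} [Fintype ι] {X : Finset (ι → ℝ)} {u v : ι → ℝ}
    (huv : u ≠ v) (h : IsLinExposed (X : Set (ι → ℝ)) {u, v}) : PolytopeAdj X u v := by
  have hconv := h.convexHull X.finite_toSet
  rw [convexHull_pair] at hconv
  exact ⟨h.subset (by simp), h.subset (by simp), huv, hconv⟩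

section Walls

variable {ι : Type*} {X : Finset (ι → ℝ)} {W : Set (ι → ℝ)}

def wallCoeff : Option Bool → ℝ
  | none => 0
  | some true => 1
  | some false => -1

theorem wallCoeff_mul_le {t : ℝ} (ht : t = 0 ∨ t = 1) (o : Option Bool) :
    wallCoeff o * t ≤ if o = some true then 1 else 0 := by
  rcases ht with rfl | rfl <;> rcases o with _ | _ | _ <;> simp [wallCoeff]

theorem wallCoeff_mul_eq_iff {t : ℝ} (ht : t = 0 ∨ t = 1) (o : Option Bool) :
    wallCoeff o * t = (if o = some true then 1 else 0) ↔
      ∀ b, o = some b → t = if b then 1 else 0 := by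
  rcases ht with rfl | rfl <;> rcases o with _ | _ | _ <;> simp [wallCoeff]

/-- The functional `∑ᵢ wallCoeff (σ i) xᵢ` is maximized over the 0/1-cube exactly on the face
prescribed by `σ`. -/
theorem IsWall.isLinExposed [Fintype ι] (h01 : IsZeroOne X) (hW : IsWall X W) :
    IsLinExposed (X : Set (ι → ℝ)) W := by
  obtain ⟨-, σ, rfl⟩ := hW
  refine ⟨∑ i, wallCoeff (σ i) • LinearMap.proj i, ∑ i, if σ i = some true then 1 else 0,
    fun x hx ↦ ?_, Set.ext fun x ↦ ?_⟩
  · simpa using Finset.sum_le_sum fun i _ ↦ wallCoeff_mul_le (h01 x hx i) (σ i)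
  · simp only [Set.mem_ofPred_eq]
    refine and_congr_right fun hx ↦ ?_
    simp only [LinearMap.sum_apply, LinearMap.smul_apply, LinearMap.coe_proj,
      Function.eval, smul_eq_mul]
    rw [Finset.sum_eq_sum_iff_of_le fun i _ ↦ wallCoeff_mul_le (h01 x hx i) (σ i)]
    simp only [Finset.mem_univ, forall_const, wallCoeff_mul_eq_iff (h01 x hx _)]

theorem IsWall.sep_apply_eq (hW : IsWall X W) (i : ι) (b : Bool)
    (hne : {x ∈ W | x i = if b then 1 else 0}.Nonempty) :
    IsWall X {x ∈ W | x i = if b then 1 else 0} := by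
  obtain ⟨-, σ, rfl⟩ := hW
  refine ⟨hne, Function.update σ i (some b), Set.ext fun x ↦ ?_⟩
  obtain ⟨w, ⟨-, hwσ⟩, hwi⟩ := hne
  simp only [Set.mem_ofPred_eq]
  constructor
  · rintro ⟨⟨hx, hxσ⟩, hxi⟩
    refine ⟨hx, fun j b' hj ↦ ?_⟩
    rcases eq_or_ne j i with rfl | hji
    · rw [Function.update_self, Option.some.injEq] at hj
      rwa [← hj]
    · exact hxσ j b' (by rwa [Function.update_of_ne hji] at hj)
  · rintro ⟨hx, hxσ⟩
    have hxi := hxσ i b (Function.update_self ..)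
    refine ⟨⟨hx, fun j b' hj ↦ ?_⟩, hxi⟩
    rcases eq_or_ne j i with rfl | hji
    · rw [hxi, ← hwi, hwσ j b' hj]
    · exact hxσ j b' (by rwa [Function.update_of_ne hji])

theorem IsWall.exists_wallBipAdj [Fintype ι] (h01 : IsZeroOne X) (hW : IsWall X W) {μ : ι}
    (h0 : {x ∈ W | x μ = 0}.Nonempty) (h1 : {x ∈ W | x μ = 1}.Nonempty) :
    ∃ u v, WallBipAdj X W μ u v := by
  have hWX := hW.isLinExposed h01
  obtain ⟨u, hu, v, hv, hu0, hv1, huv⟩ := exists_isLinExposed_pair_of_zero_one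
    (X.finite_toSet.subset hWX.subset) (LinearMap.proj μ)
    (fun x hx ↦ h01 x (hWX.subset hx) μ) h0 h1
  have hne : u ≠ v := fun h ↦ by simp_all
  exact ⟨u, v, polytopeAdj_of_isLinExposed hne (hWX.trans X.finite_toSet huv), hu, hv, hu0, hv1⟩

theorem IsStarCoord.exists_zero_and_one (h01 : IsZeroOne X) (hWX : W ⊆ X) {μ : ι}
    (hμ : IsStarCoord W μ) : {x ∈ W | x μ = 0}.Nonempty ∧ {x ∈ W | x μ = 1}.Nonempty := by
  obtain ⟨x, hx, y, hy, hxy⟩ := hμ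
  rcases h01 x (hWX hx) μ with hx' | hx' <;> rcases h01 y (hWX hy) μ with hy' | hy'
  · exact absurd (hx'.trans hy'.symm) hxy
  · exact ⟨⟨x, hx, hx'⟩, y, hy, hy'⟩
  · exact ⟨⟨y, hy, hy'⟩, x, hx, hx'⟩
  · exact absurd (hx'.trans hy'.symm) hxy

end Walls

section Matching

open Finset

theorem Set.ncard_sep_eq_card_filter {α : Type*} {s : Finset α} {W : Set α} (hW : W ⊆ s)
    (P : α → Prop) : {x ∈ W | P x}.ncard = #{x ∈ s | x ∈ W ∧ P x} := by
  rw [← Set.ncard_coe_finset]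
  congr 1
  ext x
  simpa using fun hx _ ↦ hW hx

variable {ι : Type*} [Fintype ι] {X : Finset (ι → ℝ)} {W : Set (ι → ℝ)} {μ : ι}

theorem PolytopeAdj.symm {u v : ι → ℝ} (h : PolytopeAdj X u v) : PolytopeAdj X v u :=
  (polytopeGraph X).adj_symm (u := ⟨u, h.1⟩) (v := ⟨v, h.2.1⟩) h

theorem ncard_adj_eq_add_of_isZeroOne (h01 : IsZeroOne X) (μ : ι) (u : ι → ℝ) :
    {y | y ∈ W ∧ PolytopeAdj X u y}.ncard =
      {y | y ∈ {x ∈ W | x μ = 0} ∧ PolytopeAdj X u y}.ncard +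
        {y | y ∈ {x ∈ W | x μ = 1} ∧ PolytopeAdj X u y}.ncard := by
  have hfin : ∀ S : Set (ι → ℝ), {y | y ∈ S ∧ PolytopeAdj X u y}.Finite := fun S ↦
    X.finite_toSet.subset fun y hy ↦ hy.2.2.1
  rw [← Set.ncard_union_eq _ (hfin _) (hfin _)]
  · congr 1
    ext y
    simp only [Set.mem_ofPred_eq, Set.mem_union]
    constructor
    · rintro ⟨hy, hadj⟩
      rcases h01 y hadj.2.1 μ with h | h
      exacts [Or.inl ⟨⟨hy, h⟩, hadj⟩, Or.inr ⟨⟨hy, h⟩, hadj⟩]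
    · rintro (⟨⟨hy, -⟩, hadj⟩ | ⟨⟨hy, -⟩, hadj⟩) <;> exact ⟨hy, hadj⟩
  · exact Set.disjoint_left.2 fun y h0 h1 ↦ zero_ne_one (h0.1.2.symm.trans h1.1.2)

theorem card_filter_wallBipAdj_left {u : ι → ℝ} (hu : u ∈ W) (hu0 : u μ = 0) :
    #{v ∈ X | WallBipAdj X W μ u v} =
      {v | v ∈ {x ∈ W | x μ = 1} ∧ PolytopeAdj X u v}.ncard := by
  rw [← Set.ncard_coe_finset]
  congr 1
  ext v
  rw [mem_coe, mem_filter]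
  simp only [Set.mem_ofPred_eq, WallBipAdj]
  constructor
  · rintro ⟨-, hadj, -, hvW, -, hv1⟩
    exact ⟨⟨hvW, hv1⟩, hadj⟩
  · rintro ⟨⟨hvW, hv1⟩, hadj⟩
    exact ⟨hadj.2.1, hadj, hu, hvW, hu0, hv1⟩

theorem card_filter_wallBipAdj_right {v : ι → ℝ} (hv : v ∈ W) (hv1 : v μ = 1) :
    #{u ∈ X | WallBipAdj X W μ u v} =
      {u | u ∈ {x ∈ W | x μ = 0} ∧ PolytopeAdj X v u}.ncard := by
  rw [← Set.ncard_coe_finset]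
  congr 1
  ext u
  rw [mem_coe, mem_filter]
  simp only [Set.mem_ofPred_eq, WallBipAdj]
  constructor
  · rintro ⟨-, hadj, huW, -, hu0, -⟩
    exact ⟨⟨huW, hu0⟩, hadj.symm⟩
  · rintro ⟨⟨huW, hu0⟩, hadj⟩
    exact ⟨hadj.2.1, hadj.symm, huW, hv, hu0, hv1⟩

theorem hasFracMatching_of_biregular (hWX : W ⊆ X) {p q : ℕ}
    (hp : ∀ u ∈ W, u μ = 0 → #{v ∈ X | WallBipAdj X W μ u v} = p)
    (hq : ∀ v ∈ W, v μ = 1 → #{u ∈ X | WallBipAdj X W μ u v} = q)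
    (hedge : ∃ u v, WallBipAdj X W μ u v) : HasFracMatching X W μ := by
  set A := {x ∈ X | x ∈ W ∧ x μ = 0}
  set B := {x ∈ X | x ∈ W ∧ x μ = 1}
  have hcount : #A * p = #B * q := by
    refine card_mul_eq_card_mul (WallBipAdj X W μ) (fun u hu ↦ ?_) fun v hv ↦ ?_
    · obtain ⟨-, huW, hu0⟩ := mem_filter.1 hu
      rw [bipartiteAbove, filter_filter, ← hp u huW hu0]
      exact congrArg card (filter_congr fun v _ ↦ and_iff_right_of_imp fun h ↦ ⟨h.2.2.1, h.2.2.2.2⟩)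
    · obtain ⟨-, hvW, hv1⟩ := mem_filter.1 hv
      rw [bipartiteBelow, filter_filter, ← hq v hvW hv1]
      exact congrArg card (filter_congr fun u _ ↦ and_iff_right_of_imp fun h ↦ ⟨h.2.1, h.2.2.2.1⟩)
  have hA : {x ∈ W | x μ = 0}.ncard = #A := by convert Set.ncard_sep_eq_card_filter hWX _
  have hB : {x ∈ W | x μ = 1}.ncard = #B := by convert Set.ncard_sep_eq_card_filter hWX _
  obtain ⟨u₀, v₀, hadj₀⟩ := hedge
  have hA0 : #A ≠ 0 := (card_pos.2 ⟨u₀, mem_filter.2 ⟨hadj₀.1.1, hadj₀.2.1, hadj₀.2.2.2.1⟩⟩).ne'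
  have hB0 : #B ≠ 0 :=
    (card_pos.2 ⟨v₀, mem_filter.2 ⟨hadj₀.1.2.1, hadj₀.2.2.1, hadj₀.2.2.2.2⟩⟩).ne'
  have hp0 : p ≠ 0 := by
    rw [← hp u₀ hadj₀.2.1 hadj₀.2.2.2.1]
    exact (card_pos.2 ⟨v₀, mem_filter.2 ⟨hadj₀.1.2.1, hadj₀⟩⟩).ne'
  have hq0 : q ≠ 0 := by
    rw [← hq v₀ hadj₀.2.2.1 hadj₀.2.2.2.2]
    exact (card_pos.2 ⟨u₀, mem_filter.2 ⟨hadj₀.1.1, hadj₀⟩⟩).ne'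
  refine ⟨fun u v ↦ if WallBipAdj X W μ u v then ((#A * p : ℕ) : ℚ)⁻¹ else 0,
    fun u v ↦ by positivity, fun u v h ↦ ?_, fun u hu hu0 ↦ ?_, fun v hv hv1 ↦ ?_⟩
  · by_contra hn
    exact h (if_neg hn)
  · rw [← sum_filter, sum_const, nsmul_eq_mul, hp u hu hu0, hA]
    push_cast
    field_simp
  · rw [← sum_filter, sum_const, nsmul_eq_mul, hq v hv hv1, hB, hcount]
    push_cast
    field_simp

end Matching

/-- If `P ⊆ ℝ^d` is a 0/1-polytope such that for every wall `W`
of `P` the subgraph of `G(P)` induced on `W` is a regular graph, then `P` has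
fractional wall-matchings. -/
theorem hasFractionalWallMatchings_of_regular_walls {d : ℕ} (X : Finset (Fin d → ℝ))
    (hX01 : IsZeroOne X)
    (hreg : ∀ W : Set (Fin d → ℝ), IsWall X W →
      ∃ k : ℕ, ∀ x ∈ W, {y | y ∈ W ∧ PolytopeAdj X x y}.ncard = k) :
    HasFractionalWallMatchings X := by
  intro W hW μ hμ
  have hWX : W ⊆ X := (hW.isLinExposed hX01).subset
  obtain ⟨h0, h1⟩ := hμ.1.exists_zero_and_one hX01 hWX
  have hW₀ : IsWall X {x ∈ W | x μ = 0} := by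
    simpa using hW.sep_apply_eq μ false (by simpa using h0)
  have hW₁ : IsWall X {x ∈ W | x μ = 1} := by
    simpa using hW.sep_apply_eq μ true (by simpa using h1)
  obtain ⟨k, hk⟩ := hreg W hW
  obtain ⟨k₀, hk₀⟩ := hreg _ hW₀
  obtain ⟨k₁, hk₁⟩ := hreg _ hW₁
  refine hasFracMatching_of_biregular hWX (p := k - k₀) (q := k - k₁) (fun u hu hu0 ↦ ?_)
    (fun v hv hv1 ↦ ?_) (hW.exists_wallBipAdj hX01 h0 h1)
  · have := ncard_adj_eq_add_of_isZeroOne (W := W) hX01 μ u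
    rw [hk u hu, hk₀ u ⟨hu, hu0⟩, ← card_filter_wallBipAdj_left hu hu0] at this
    omega
  · have := ncard_adj_eq_add_of_isZeroOne (W := W) hX01 μ v
    rw [hk v hv, hk₁ v ⟨hv, hv1⟩, ← card_filter_wallBipAdj_right hv hv1] at this
    omega
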